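/- Let n ≥ 2 be an integer. For every function f in the complex linear span of {e_j : j ∈ Λ_{2n−1}^*}, both cubature formulas hold: ∫_{[−1/2,1/2]²} f(x) dx = (1/(2n²)) · Σ_{k ∈ X_n^*} c_k · f(k/(2n)) and ∫_{[−1/2,1/2]²} f(x) dx = (1/(2n²)) · Σ_{k ∈ X_n} f(k/(2n)). -/

import Mathlib

open MeasureTheory Complex

attribute [local instance] Classical.propDecidable

/-- The exponential e_k(x) = exp(2 pi i (k1 x1 + k2 x2)). -/
noncomputable def e2 (k : ℤ × ℤ) (x : ℝ × ℝ) : ℂ :=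
  Complex.exp (2 * Real.pi * Complex.I * ((k.1 : ℂ) * x.1 + (k.2 : ℂ) * x.2))

/-- The point k/(2n) in the plane. -/
noncomputable def pt2 (n : ℕ) (k : ℤ × ℤ) : ℝ × ℝ :=
  ((k.1 : ℝ) / (2 * n), (k.2 : ℝ) / (2 * n))

/-- Λ_m^* = {j : |j1+j2| ≤ m and |j1-j2| ≤ m}. -/
noncomputable def LamStar (m : ℕ) : Finset (ℤ × ℤ) :=
  (Finset.Icc (-(m : ℤ), -(m : ℤ)) ((m : ℤ), (m : ℤ))).filter
    fun j => |j.1 + j.2| ≤ (m : ℤ) ∧ |j.1 - j.2| ≤ (m : ℤ)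

/-- X_n = {k : k1 ≡ k2 (mod 2), -n ≤ k_i < n}. -/
noncomputable def X2 (n : ℕ) : Finset (ℤ × ℤ) :=
  (Finset.Icc (-(n : ℤ), -(n : ℤ)) ((n : ℤ), (n : ℤ))).filter
    fun k => k.1 % 2 = k.2 % 2 ∧ k.1 < (n : ℤ) ∧ k.2 < (n : ℤ)

/-- X_n^* = {k : k1 ≡ k2 (mod 2), |k_i| ≤ n}. -/
noncomputable def X2star (n : ℕ) : Finset (ℤ × ℤ) :=
  (Finset.Icc (-(n : ℤ), -(n : ℤ)) ((n : ℤ), (n : ℤ))).filter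
    fun k => k.1 % 2 = k.2 % 2

/-- The weight c_k on X_n^*. -/
noncomputable def c2 (n : ℕ) (k : ℤ × ℤ) : ℝ :=
  if |k.1| < (n : ℤ) ∧ |k.2| < (n : ℤ) then 1
  else if |k.1| = (n : ℤ) ∧ |k.2| = (n : ℤ) then 1/4
  else 1/2

/-!
Both sides are `ℂ`-linear in `f`, so it suffices to check the exponentials `e_j`,
`j ∈ Λ*_{2n-1}`, whose integral is `δ_{j,0}`. With `ζ = exp (πi/n)` a primitive `2n`-th root
of unity, `e_j (k/2n) = ζ ^ (j₁k₁) ζ ^ (j₂k₂)`, and the parity constraint `k₁ ≡ k₂ (mod 2)` is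
`(1 + (-1) ^ k₁ (-1) ^ k₂) / 2` with `(-1) ^ k = ζ ^ (nk)`. Hence the node sum factors into
one-dimensional sums of `ζ ^ (ak)` over a full period, which vanish unless `2n ∣ a`; for `X_n^*`
the weights `c_k` are products of trapezoidal weights, which give the same one-dimensional sums.
Since `|j₁ ± j₂| < 2n` on `Λ*_{2n-1}`, only `j = 0` survives.
-/

theorem setIntegral_eq_of_mem_span {α 𝕜 E : Type*} [MeasurableSpace α] {μ : Measure α}
    {s : Set α} [NontriviallyNormedField 𝕜] [NormedAddCommGroup E] [NormedSpace ℝ E]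
    [NormedSpace 𝕜 E] [SMulCommClass ℝ 𝕜 E] {S : Set (α → E)} (L : (α → E) →ₗ[𝕜] E)
    (h_int : ∀ g ∈ S, IntegrableOn g s μ) (h_eq : ∀ g ∈ S, ∫ x in s, g x ∂μ = L g)
    {f : α → E} (hf : f ∈ Submodule.span 𝕜 S) : ∫ x in s, f x ∂μ = L f := by
  suffices IntegrableOn f s μ ∧ ∫ x in s, f x ∂μ = L f from this.2
  induction hf using Submodule.span_induction with
  | mem g hg => exact ⟨h_int g hg, h_eq g hg⟩
  | zero => exact ⟨integrableOn_zero, by simp⟩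
  | add g h _ _ ihg ihh =>
    refine ⟨ihg.1.add ihh.1, ?_⟩
    rw [map_add, ← ihg.2, ← ihh.2]
    exact integral_add ihg.1 ihh.1
  | smul a g _ ihg =>
    refine ⟨ihg.1.smul a, ?_⟩
    rw [map_smul, ← ihg.2]
    exact integral_smul a g

theorem Int.sum_Ico_add_eq_sum_range {M : Type*} [AddCommMonoid M] (f : ℤ → M) (m : ℤ)
    (N : ℕ) : ∑ k ∈ Finset.Ico m (m + N), f k = ∑ i ∈ Finset.range N, f (m + i) := by
  refine Finset.sum_nbij' (fun k => (k - m).toNat) (fun i => m + i) ?_ ?_ ?_ ?_ ?_ <;>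
    intro k hk <;> simp only [Finset.mem_Ico, Finset.mem_range] at hk ⊢
  all_goals first | omega | (congr 1; omega)

theorem IsPrimitiveRoot.sum_zpow_mul_Ico {K : Type*} [Field K] {ζ : K} {N : ℕ}
    (hζ : IsPrimitiveRoot ζ N) (hN : N ≠ 0) (a m : ℤ) :
    ∑ k ∈ Finset.Ico m (m + N), ζ ^ (a * k) = if (N : ℤ) ∣ a then (N : K) else 0 := by
  have hζ0 : ζ ≠ 0 := hζ.ne_zero hN
  rw [Int.sum_Ico_add_eq_sum_range]
  split_ifs with ha
  · have hone : ∀ i : ℕ, ζ ^ (a * (m + i)) = 1 := fun i =>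
      (hζ.zpow_eq_one_iff_dvd _).2 (ha.mul_right _)
    simp [hone]
  · have hterm : ∀ i : ℕ, ζ ^ (a * (m + i)) = ζ ^ (a * m) * (ζ ^ a) ^ i := fun i => by
      rw [mul_add, zpow_add₀ hζ0, zpow_mul ζ a i, zpow_natCast]
    have hne : ζ ^ a ≠ 1 := by rwa [Ne, hζ.zpow_eq_one_iff_dvd]
    have hpow : (ζ ^ a) ^ N = 1 := by
      rw [← zpow_natCast, ← zpow_mul, hζ.zpow_eq_one_iff_dvd]
      exact dvd_mul_left _ _
    have hgeom : ∑ i ∈ Finset.range N, (ζ ^ a) ^ i = 0 := by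
      have := geom_sum_mul (ζ ^ a) N
      rw [hpow, sub_self] at this
      exact (mul_eq_zero.1 this).resolve_right (sub_ne_zero.2 hne)
    simp only [hterm, ← Finset.mul_sum, hgeom, mul_zero]

theorem sum_filter_parity_mul {K : Type*} [Field K] [CharZero K] (s t : Finset ℤ)
    (F G : ℤ → K) :
    ∑ k ∈ (s ×ˢ t).filter (fun k : ℤ × ℤ => k.1 % 2 = k.2 % 2), F k.1 * G k.2
      = ((∑ k ∈ s, F k) * (∑ k ∈ t, G k)
        + (∑ k ∈ s, (-1) ^ k * F k) * (∑ k ∈ t, (-1) ^ k * G k)) / 2 := by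
  -- `1_{k₁ ≡ k₂ [ZMOD 2]} = (1 + (-1) ^ k₁ * (-1) ^ k₂) / 2`
  have hind : ∀ k : ℤ × ℤ, (if k.1 % 2 = k.2 % 2 then F k.1 * G k.2 else 0)
      = (F k.1 * G k.2 + (-1) ^ k.1 * F k.1 * ((-1) ^ k.2 * G k.2)) / 2 := by
    intro k
    have hsign : ((-1 : K) ^ k.1 * (-1) ^ k.2) = if k.1 % 2 = k.2 % 2 then 1 else -1 := by
      have hpar : Even (k.1 + k.2) ↔ k.1 % 2 = k.2 % 2 := by rw [Int.even_iff]; omega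
      rw [← zpow_add₀ (by norm_num), neg_one_zpow_eq_ite]
      simp only [hpar]
    split_ifs at hsign ⊢ <;> linear_combination (-(F k.1 * G k.2) / 2) * hsign
  rw [Finset.sum_filter, Finset.sum_congr rfl (fun k _ => hind k), ← Finset.sum_div,
    Finset.sum_add_distrib, Finset.sum_product, Finset.sum_product, Finset.sum_mul_sum,
    Finset.sum_mul_sum]

theorem integral_Icc_exp_two_pi_I_int_mul (a : ℤ) :
    ∫ t in Set.Icc (-(1 : ℝ) / 2) (1 / 2), Complex.exp (2 * Real.pi * Complex.I * a * t)
      = if a = 0 then 1 else 0 := by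
  split_ifs with ha
  · simp [ha]
    norm_num
  have hc : 2 * Real.pi * Complex.I * a ≠ 0 := by simp [Real.pi_ne_zero, ha]
  rw [integral_Icc_eq_integral_Ioc, ← intervalIntegral.integral_of_le (by norm_num),
    integral_exp_mul_complex hc]
  have hperiod : 2 * Real.pi * Complex.I * a * ((1 / 2 : ℝ) : ℂ)
      = 2 * Real.pi * Complex.I * a * ((-1 / 2 : ℝ) : ℂ) + a * (2 * Real.pi * Complex.I) := by
    push_cast
    ring
  rw [hperiod, Complex.exp_add, Complex.exp_int_mul_two_pi_mul_I, mul_one, sub_self, zero_div]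

theorem integral_e2 (j : ℤ × ℤ) :
    ∫ x in Set.Icc ((-(1:ℝ)/2, -(1:ℝ)/2)) (((1:ℝ)/2, (1:ℝ)/2)), e2 j x
      = if j = 0 then 1 else 0 := by
  have hprod : ∀ x : ℝ × ℝ, e2 j x = Complex.exp (2 * Real.pi * Complex.I * j.1 * x.1)
      * Complex.exp (2 * Real.pi * Complex.I * j.2 * x.2) := by
    intro x
    rw [e2, ← Complex.exp_add]
    ring_nf
  simp_rw [hprod]
  rw [← Set.Icc_prod_Icc, Measure.volume_eq_prod, setIntegral_prod_mul
    (fun t : ℝ => Complex.exp (2 * Real.pi * Complex.I * j.1 * t))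
    (fun t : ℝ => Complex.exp (2 * Real.pi * Complex.I * j.2 * t)),
    integral_Icc_exp_two_pi_I_int_mul, integral_Icc_exp_two_pi_I_int_mul]
  by_cases h₁ : j.1 = 0 <;> by_cases h₂ : j.2 = 0 <;> simp [h₁, h₂, Prod.ext_iff]

noncomputable def ζ (n : ℕ) : ℂ := Complex.exp (2 * Real.pi * Complex.I / (2 * n))

theorem isPrimitiveRoot_ζ {n : ℕ} (hn : 0 < n) : IsPrimitiveRoot (ζ n) (2 * n) := by
  simpa [ζ] using Complex.isPrimitiveRoot_exp (2 * n) (by omega)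

theorem ζ_pow_self {n : ℕ} (hn : 0 < n) : ζ n ^ n = -1 := by
  have hn' : (n : ℂ) ≠ 0 := Nat.cast_ne_zero.2 hn.ne'
  rw [ζ, ← Complex.exp_nat_mul, ← Complex.exp_pi_mul_I]
  congr 1
  field_simp

theorem neg_one_zpow_mul_ζ_zpow {n : ℕ} (hn : 0 < n) (a k : ℤ) :
    (-1) ^ k * ζ n ^ (a * k) = ζ n ^ ((a + n) * k) := by
  rw [add_mul, zpow_add₀ ((isPrimitiveRoot_ζ hn).ne_zero (by omega)), zpow_mul (ζ n) (n : ℤ) k,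
    zpow_natCast, ζ_pow_self hn, mul_comm]

theorem e2_pt2 (n : ℕ) (j k : ℤ × ℤ) :
    e2 j (pt2 n k) = ζ n ^ (j.1 * k.1) * ζ n ^ (j.2 * k.2) := by
  simp only [e2, pt2, ζ, ← Complex.exp_int_mul, ← Complex.exp_add]
  congr 1
  push_cast
  ring

theorem sum_Ico_ζ_zpow {n : ℕ} (hn : 0 < n) (a : ℤ) :
    ∑ k ∈ Finset.Ico (-n : ℤ) n, ζ n ^ (a * k) = if (2 * n : ℤ) ∣ a then (2 * n : ℂ) else 0 := by
  have h := (isPrimitiveRoot_ζ hn).sum_zpow_mul_Ico (by omega) a (-n)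
  rw [show -(n : ℤ) + (2 * n : ℕ) = n by push_cast; ring] at h
  simpa using h

noncomputable def trapezoidWeight (n : ℕ) (k : ℤ) : ℂ := if |k| = n then 1 / 2 else 1

theorem sum_Icc_trapezoidWeight_mul {n : ℕ} (hn : 0 < n) (g : ℤ → ℂ) (hg : g n = g (-n)) :
    ∑ k ∈ Finset.Icc (-n : ℤ) n, trapezoidWeight n k * g k
      = ∑ k ∈ Finset.Ico (-n : ℤ) n, g k := by
  have hweight : ∀ k ∈ Finset.Ioo (-n : ℤ) n, trapezoidWeight n k * g k = g k := by
    intro k hk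
    rw [Finset.mem_Ioo] at hk
    rw [trapezoidWeight, if_neg (abs_lt.2 hk).ne, one_mul]
  have hlt : (-n : ℤ) < n := by omega
  rw [← Finset.Ico_insert_right hlt.le, ← Finset.Ioo_insert_left hlt,
    Finset.sum_insert (by simp; omega), Finset.sum_insert Finset.left_notMem_Ioo,
    Finset.sum_insert Finset.left_notMem_Ioo, Finset.sum_congr rfl hweight, hg]
  simp only [trapezoidWeight, abs_neg, Nat.abs_cast, if_true]
  ring

theorem sum_Icc_trapezoidWeight_ζ_zpow {n : ℕ} (hn : 0 < n) (a : ℤ) :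
    ∑ k ∈ Finset.Icc (-n : ℤ) n, trapezoidWeight n k * ζ n ^ (a * k)
      = if (2 * n : ℤ) ∣ a then (2 * n : ℂ) else 0 := by
  have hζ := isPrimitiveRoot_ζ hn
  rw [sum_Icc_trapezoidWeight_mul hn, sum_Ico_ζ_zpow hn]
  -- the two endpoints `±n` carry the same value by `2n`-periodicity
  rw [mul_neg, zpow_neg]
  apply eq_inv_of_mul_eq_one_left
  rw [← zpow_add₀ (hζ.ne_zero (by omega)), hζ.zpow_eq_one_iff_dvd]
  exact ⟨a, by push_cast; ring⟩

theorem c2_eq_trapezoidWeight_mul (n : ℕ) {k : ℤ × ℤ} (hk₁ : |k.1| ≤ n) (hk₂ : |k.2| ≤ n) :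
    (c2 n k : ℂ) = trapezoidWeight n k.1 * trapezoidWeight n k.2 := by
  simp only [c2, trapezoidWeight]
  split_ifs <;> first | omega | norm_num

theorem eq_zero_of_two_mul_dvd {n : ℕ} {j : ℤ × ℤ} (hsum : |j.1 + j.2| < 2 * n)
    (hdiff : |j.1 - j.2| < 2 * n) (h₁ : (2 * n : ℤ) ∣ j.1) (h₂ : (2 * n : ℤ) ∣ j.2) : j = 0 := by
  have hs := Int.eq_zero_of_abs_lt_dvd (dvd_add h₁ h₂) hsum
  have hd := Int.eq_zero_of_abs_lt_dvd (dvd_sub h₁ h₂) hdiff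
  ext <;> simp only [Prod.fst_zero, Prod.snd_zero] <;> omega

theorem not_and_two_mul_dvd_add {n : ℕ} (hn : 0 < n) {j : ℤ × ℤ} (hsum : |j.1 + j.2| < 2 * n)
    (hdiff : |j.1 - j.2| < 2 * n) : ¬((2 * n : ℤ) ∣ j.1 + n ∧ (2 * n : ℤ) ∣ j.2 + n) := by
  rintro ⟨h₁, h₂⟩
  have hs : (2 * n : ℤ) ∣ j.1 + j.2 := by
    have := dvd_add h₁ h₂
    rwa [show j.1 + n + (j.2 + n) = j.1 + j.2 + 2 * n by ring, dvd_add_self_right] at this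
  have hd : (2 * n : ℤ) ∣ j.1 - j.2 := by
    simpa only [add_sub_add_right_eq_sub] using dvd_sub h₁ h₂
  have hs0 := Int.eq_zero_of_abs_lt_dvd hs hsum
  have hd0 := Int.eq_zero_of_abs_lt_dvd hd hdiff
  rw [show j.1 = 0 by omega, zero_add] at h₁
  have := Int.eq_zero_of_abs_lt_dvd h₁ (by rw [Nat.abs_cast]; omega)
  omega

theorem sum_filter_parity_e2 {n : ℕ} (hn : 0 < n) (s : Finset ℤ) (w : ℤ → ℂ)
    (hs : ∀ a : ℤ, ∑ k ∈ s, w k * ζ n ^ (a * k) = if (2 * n : ℤ) ∣ a then (2 * n : ℂ) else 0)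
    {j : ℤ × ℤ} (hsum : |j.1 + j.2| < 2 * n) (hdiff : |j.1 - j.2| < 2 * n) :
    ∑ k ∈ (s ×ˢ s).filter (fun k : ℤ × ℤ => k.1 % 2 = k.2 % 2), w k.1 * w k.2 * e2 j (pt2 n k)
      = if j = 0 then 2 * (n : ℂ) ^ 2 else 0 := by
  have hterm : ∀ k : ℤ × ℤ, w k.1 * w k.2 * e2 j (pt2 n k)
      = (w k.1 * ζ n ^ (j.1 * k.1)) * (w k.2 * ζ n ^ (j.2 * k.2)) := by
    intro k
    rw [e2_pt2]
    ring
  have hshift : ∀ a : ℤ, ∑ k ∈ s, (-1) ^ k * (w k * ζ n ^ (a * k))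
      = if (2 * n : ℤ) ∣ a + n then (2 * n : ℂ) else 0 := by
    intro a
    rw [← hs]
    exact Finset.sum_congr rfl fun k _ => by rw [mul_left_comm, neg_one_zpow_mul_ζ_zpow hn]
  have hshift0 : (if (2 * n : ℤ) ∣ j.1 + n then (2 * n : ℂ) else 0)
      * (if (2 * n : ℤ) ∣ j.2 + n then (2 * n : ℂ) else 0) = 0 := by
    rcases not_and_or.1 (not_and_two_mul_dvd_add hn hsum hdiff) with h | h <;> simp [h]
  simp only [hterm]
  rw [sum_filter_parity_mul s s (fun k => w k * ζ n ^ (j.1 * k)) (fun k => w k * ζ n ^ (j.2 * k)),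
    hs, hs, hshift, hshift, hshift0, add_zero]
  by_cases hj : j = 0
  · simp [hj]
    ring
  · rcases not_and_or.1 fun h => hj (eq_zero_of_two_mul_dvd hsum hdiff h.1 h.2) with h | h <;>
      simp [h, hj]

theorem sum_X2_e2 {n : ℕ} (hn : 0 < n) {j : ℤ × ℤ} (hsum : |j.1 + j.2| < 2 * n)
    (hdiff : |j.1 - j.2| < 2 * n) :
    ∑ k ∈ X2 n, e2 j (pt2 n k) = if j = 0 then 2 * (n : ℂ) ^ 2 else 0 := by
  have hX : X2 n = (Finset.Ico (-n : ℤ) n ×ˢ Finset.Ico (-n : ℤ) n).filter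
      (fun k : ℤ × ℤ => k.1 % 2 = k.2 % 2) := by
    ext k
    simp only [X2, Finset.mem_filter, Finset.mem_Icc, Finset.mem_product, Finset.mem_Ico,
      Prod.le_def]
    omega
  simpa [hX] using
    sum_filter_parity_e2 hn _ 1 (by simpa using sum_Ico_ζ_zpow hn) hsum hdiff

theorem sum_X2star_c2_e2 {n : ℕ} (hn : 0 < n) {j : ℤ × ℤ} (hsum : |j.1 + j.2| < 2 * n)
    (hdiff : |j.1 - j.2| < 2 * n) :
    ∑ k ∈ X2star n, (c2 n k : ℂ) * e2 j (pt2 n k) = if j = 0 then 2 * (n : ℂ) ^ 2 else 0 := by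
  have hX : X2star n = (Finset.Icc (-n : ℤ) n ×ˢ Finset.Icc (-n : ℤ) n).filter
      (fun k : ℤ × ℤ => k.1 % 2 = k.2 % 2) := by
    ext k
    simp only [X2star, Finset.mem_filter, Finset.mem_Icc, Finset.mem_product, Prod.le_def]
    omega
  rw [hX, ← sum_filter_parity_e2 hn _ _ (sum_Icc_trapezoidWeight_ζ_zpow hn) hsum hdiff]
  refine Finset.sum_congr rfl fun k hk => ?_
  simp only [Finset.mem_filter, Finset.mem_product, Finset.mem_Icc] at hk
  rw [c2_eq_trapezoidWeight_mul n (abs_le.2 hk.1.1) (abs_le.2 hk.1.2)]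

theorem abs_lt_of_mem_LamStar {n : ℕ} (hn : 0 < n) {j : ℤ × ℤ} (hj : j ∈ LamStar (2 * n - 1)) :
    |j.1 + j.2| < 2 * n ∧ |j.1 - j.2| < 2 * n := by
  simp only [LamStar, Finset.mem_filter] at hj
  omega

noncomputable def cubatureX2 (n : ℕ) : (ℝ × ℝ → ℂ) →ₗ[ℂ] ℂ where
  toFun g := 1 / (2 * (n : ℂ) ^ 2) * ∑ k ∈ X2 n, g (pt2 n k)
  map_add' g h := by simp only [Pi.add_apply, Finset.sum_add_distrib, mul_add]
  map_smul' a g := by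
    simp only [Pi.smul_apply, smul_eq_mul, ← Finset.mul_sum, RingHom.id_apply]
    ring

noncomputable def cubatureX2star (n : ℕ) : (ℝ × ℝ → ℂ) →ₗ[ℂ] ℂ where
  toFun g := 1 / (2 * (n : ℂ) ^ 2) * ∑ k ∈ X2star n, (c2 n k : ℂ) * g (pt2 n k)
  map_add' g h := by simp only [Pi.add_apply, mul_add, Finset.sum_add_distrib]
  map_smul' a g := by
    simp only [Pi.smul_apply, smul_eq_mul, mul_left_comm _ a, ← Finset.mul_sum, RingHom.id_apply]

theorem cubatureX2_e2 {n : ℕ} (hn : 0 < n) {j : ℤ × ℤ} (hj : j ∈ LamStar (2 * n - 1)) :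
    cubatureX2 n (e2 j) = if j = 0 then 1 else 0 := by
  obtain ⟨hsum, hdiff⟩ := abs_lt_of_mem_LamStar hn hj
  have hnorm : 2 * (n : ℂ) ^ 2 ≠ 0 := by simp [hn.ne']
  change 1 / (2 * (n : ℂ) ^ 2) * _ = _
  rw [sum_X2_e2 hn hsum hdiff, mul_ite, one_div_mul_cancel hnorm, mul_zero]

theorem cubatureX2star_e2 {n : ℕ} (hn : 0 < n) {j : ℤ × ℤ} (hj : j ∈ LamStar (2 * n - 1)) :
    cubatureX2star n (e2 j) = if j = 0 then 1 else 0 := by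
  obtain ⟨hsum, hdiff⟩ := abs_lt_of_mem_LamStar hn hj
  have hnorm : 2 * (n : ℂ) ^ 2 ≠ 0 := by simp [hn.ne']
  change 1 / (2 * (n : ℂ) ^ 2) * _ = _
  rw [sum_X2star_c2_e2 hn hsum hdiff, mul_ite, one_div_mul_cancel hnorm, mul_zero]

theorem trig_cubature_2d (n : ℕ) (hn : 2 ≤ n)
    (f : ℝ × ℝ → ℂ)
    (hf : f ∈ Submodule.span ℂ (e2 '' (LamStar (2 * n - 1) : Set (ℤ × ℤ)))) :
    (∫ x in Set.Icc ((-(1:ℝ)/2, -(1:ℝ)/2)) (((1:ℝ)/2, (1:ℝ)/2)), f x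
        = (1 / (2 * (n : ℂ) ^ 2)) * ∑ k ∈ X2star n, (c2 n k : ℂ) * f (pt2 n k)) ∧
    (∫ x in Set.Icc ((-(1:ℝ)/2, -(1:ℝ)/2)) (((1:ℝ)/2, (1:ℝ)/2)), f x
        = (1 / (2 * (n : ℂ) ^ 2)) * ∑ k ∈ X2 n, f (pt2 n k)) := by
  have hn₀ : 0 < n := by omega
  have hint : ∀ g ∈ e2 '' (LamStar (2 * n - 1) : Set (ℤ × ℤ)),
      IntegrableOn g (Set.Icc ((-(1:ℝ)/2, -(1:ℝ)/2)) (((1:ℝ)/2, (1:ℝ)/2))) := by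
    rintro _ ⟨j, -, rfl⟩
    exact Continuous.integrableOn_Icc (by unfold e2; fun_prop)
  refine ⟨setIntegral_eq_of_mem_span (cubatureX2star n) hint ?_ hf,
    setIntegral_eq_of_mem_span (cubatureX2 n) hint ?_ hf⟩
  · rintro _ ⟨j, hj, rfl⟩
    rw [integral_e2, cubatureX2star_e2 hn₀ hj]
  · rintro _ ⟨j, hj, rfl⟩
    rw [integral_e2, cubatureX2_e2 hn₀ hj]
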